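/- For N ≥ 1 and s ∈ (0, N/2), let κ_{N,s} = 2^{-2s}·π^{-s}·(Γ((N-2s)/2)/Γ((N+2s)/2))·(Γ(N)/Γ(N/2))^{2s/N} be the best fractional Sobolev constant. Then lim_{s→0⁺} κ_{N,s} = 1 and lim_{s→0⁺} κ_{N,s}^{1/s} = (1/(4π))·(Γ(N)/Γ(N/2))^{2/N}·e^{-2ψ(N/2)}, where ψ = Γ'/Γ is the digamma function. -/

import Mathlib

open Real Filter

/-- The digamma function `ψ = Γ'/Γ`. -/
noncomputable def digamma (x : ℝ) : ℝ := deriv Real.Gamma x / Real.Gamma x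

/-! Near `s = 0` all Gamma values involved are positive, so `κ_{N,s} = exp (F s)` with
`F s = log κ_{N,s}` differentiable and `F 0 = 0`. Hence `κ_{N,s} → 1`, and
`κ_{N,s}^{1/s} = exp (F s / s) → exp (F' 0)`. Since `(log Γ)' = ψ`, the two Gamma factors
contribute `-ψ(N/2) - ψ(N/2)` to `F' 0`. -/

open Topology

theorem hasDerivAt_log_Gamma {x : ℝ} (hx : ∀ m : ℕ, x ≠ -m) :
    HasDerivAt (fun y => log (Gamma y)) (digamma x) x := by
  have h := (differentiableAt_Gamma hx).hasDerivAt.log (Gamma_ne_zero hx)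
  rwa [digamma]

theorem tendsto_exp_rpow_one_div_of_hasDerivAt {F : ℝ → ℝ} {L : ℝ} (hF : HasDerivAt F L 0)
    (hF0 : F 0 = 0) : Tendsto (fun s => exp (F s) ^ (1 / s)) (𝓝[≠] 0) (𝓝 (exp L)) := by
  have hslope : Tendsto (fun s => F s / s) (𝓝[≠] 0) (𝓝 L) := by
    refine (hasDerivAt_iff_tendsto_slope.mp hF).congr fun s => ?_
    rw [slope_def_field, hF0, sub_zero, sub_zero]
  refine ((continuous_exp.tendsto L).comp hslope).congr fun s => ?_
  rw [rpow_def_of_pos (exp_pos _), log_exp, mul_one_div, Function.comp_apply]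

section SobolevConstant

variable {N s : ℝ}

noncomputable def sobolevConst (N s : ℝ) : ℝ :=
  2 ^ (-(2 * s)) * π ^ (-s) * (Gamma ((N - 2 * s) / 2) / Gamma ((N + 2 * s) / 2)) *
    (Gamma N / Gamma (N / 2)) ^ (2 * s / N)

noncomputable def logSobolevConst (N s : ℝ) : ℝ :=
  -(2 * s) * log 2 - s * log π + (log (Gamma ((N - 2 * s) / 2)) - log (Gamma ((N + 2 * s) / 2))) +
    2 * s / N * log (Gamma N / Gamma (N / 2))

theorem Gamma_div_Gamma_half_pos (hN : 0 < N) : 0 < Gamma N / Gamma (N / 2) :=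
  div_pos (Gamma_pos_of_pos hN) (Gamma_pos_of_pos (by linarith))

@[simp]
theorem logSobolevConst_zero : logSobolevConst N 0 = 0 := by
  simp [logSobolevConst]

theorem exp_logSobolevConst (hN : 0 < N) (hs₁ : -N < 2 * s) (hs₂ : 2 * s < N) :
    exp (logSobolevConst N s) = sobolevConst N s := by
  have hΓ₁ : 0 < Gamma ((N - 2 * s) / 2) := Gamma_pos_of_pos (by linarith)
  have hΓ₂ : 0 < Gamma ((N + 2 * s) / 2) := Gamma_pos_of_pos (by linarith)
  have hΓ := Gamma_div_Gamma_half_pos hN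
  have hratio : Gamma ((N - 2 * s) / 2) / Gamma ((N + 2 * s) / 2) =
      exp (log (Gamma ((N - 2 * s) / 2)) - log (Gamma ((N + 2 * s) / 2))) := by
    rw [exp_sub, exp_log hΓ₁, exp_log hΓ₂]
  rw [sobolevConst, rpow_def_of_pos two_pos, rpow_def_of_pos pi_pos, rpow_def_of_pos hΓ, hratio,
    ← exp_add, ← exp_add, ← exp_add, logSobolevConst]
  ring_nf

theorem eventually_exp_logSobolevConst (hN : 0 < N) :
    ∀ᶠ s in 𝓝 0, exp (logSobolevConst N s) = sobolevConst N s := by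
  filter_upwards [Ioo_mem_nhds (by linarith : -N / 2 < 0) (by linarith : 0 < N / 2)]
    with s ⟨hs₁, hs₂⟩
  exact exp_logSobolevConst hN (by linarith) (by linarith)

theorem hasDerivAt_logSobolevConst (hN : 0 < N) :
    HasDerivAt (logSobolevConst N)
      (log (1 / (4 * π) * (Gamma N / Gamma (N / 2)) ^ (2 / N) * exp (-2 * digamma (N / 2)))) 0 := by
  have hΓ := Gamma_div_Gamma_half_pos hN
  have hlog : log (1 / (4 * π) * (Gamma N / Gamma (N / 2)) ^ (2 / N) * exp (-2 * digamma (N / 2)))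
      = -2 * log 2 - log π - 2 * digamma (N / 2) + 2 / N * log (Gamma N / Gamma (N / 2)) := by
    rw [log_mul (by positivity) (exp_pos _).ne', log_mul (by positivity) (rpow_pos_of_pos hΓ _).ne',
      log_exp, log_rpow hΓ, one_div, log_inv, log_mul (by norm_num) pi_pos.ne',
      show (4 : ℝ) = 2 ^ 2 by norm_num, log_pow]
    push_cast
    ring
  rw [hlog]
  have hψ : HasDerivAt (fun y => log (Gamma y)) (digamma (N / 2)) (N / 2) :=
    hasDerivAt_log_Gamma fun m => by have : (0 : ℝ) ≤ m := m.cast_nonneg; linarith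
  have h₁ : HasDerivAt (fun s => log (Gamma ((N - 2 * s) / 2))) (digamma (N / 2) * (-1)) 0 := by
    refine hψ.comp_of_eq 0 ?_ (by simp)
    simpa using (((hasDerivAt_id (0 : ℝ)).const_mul 2).const_sub N).div_const 2
  have h₂ : HasDerivAt (fun s => log (Gamma ((N + 2 * s) / 2))) (digamma (N / 2) * 1) 0 := by
    refine hψ.comp_of_eq 0 ?_ (by simp)
    simpa using (((hasDerivAt_id (0 : ℝ)).const_mul 2).const_add N).div_const 2
  have h := (((((hasDerivAt_id (0 : ℝ)).const_mul 2).neg.mul_const (log 2)).sub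
    ((hasDerivAt_id (0 : ℝ)).mul_const (log π))).add (h₁.sub h₂)).add
    ((((hasDerivAt_id (0 : ℝ)).const_mul 2).div_const N).mul_const (log (Gamma N / Gamma (N / 2))))
  exact h.congr_deriv (by ring)

end SobolevConstant

/-- Asymptotics of the best fractional Sobolev constant `κ_{N,s}` as `s → 0⁺`:
`κ_{N,s} → 1` and `κ_{N,s}^{1/s} → (1/(4π)) (Γ(N)/Γ(N/2))^{2/N} e^{-2ψ(N/2)}`. -/
theorem stmt4 (N : ℕ) (hN : 1 ≤ N) :
    Tendsto (fun s : ℝ => (2:ℝ) ^ (-(2*s)) * Real.pi ^ (-s) *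
        (Real.Gamma ((N - 2*s)/2) / Real.Gamma ((N + 2*s)/2)) *
        (Real.Gamma N / Real.Gamma (N/2)) ^ (2*s/N))
      (nhdsWithin 0 (Set.Ioi 0)) (nhds 1)
    ∧ Tendsto (fun s : ℝ => ((2:ℝ) ^ (-(2*s)) * Real.pi ^ (-s) *
        (Real.Gamma ((N - 2*s)/2) / Real.Gamma ((N + 2*s)/2)) *
        (Real.Gamma N / Real.Gamma (N/2)) ^ (2*s/N)) ^ (1/s))
      (nhdsWithin 0 (Set.Ioi 0))
      (nhds (1/(4*Real.pi) * (Real.Gamma N / Real.Gamma (N/2)) ^ ((2:ℝ)/N) *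
        Real.exp (-2 * digamma (N/2)))) := by
  have hN' : (0 : ℝ) < N := by exact_mod_cast hN
  have hκ := eventually_exp_logSobolevConst hN'
  have hF := hasDerivAt_logSobolevConst hN'
  have hpos : 0 < 1 / (4 * π) * (Gamma N / Gamma (N / 2)) ^ ((2 : ℝ) / N) *
      exp (-2 * digamma (N / 2)) := by
    have := Gamma_div_Gamma_half_pos hN'
    positivity
  constructor
  · have h := (continuous_exp.tendsto _).comp hF.continuousAt.tendsto
    rw [logSobolevConst_zero, exp_zero] at h
    exact (h.congr' hκ).mono_left nhdsWithin_le_nhds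
  · have h := (tendsto_exp_rpow_one_div_of_hasDerivAt hF logSobolevConst_zero).mono_left
      (nhdsWithin_mono _ fun s (hs : 0 < s) => hs.ne')
    rw [exp_log hpos] at h
    refine h.congr' ((hκ.filter_mono nhdsWithin_le_nhds).mono fun s hs => ?_)
    exact congrArg (· ^ (1 / s)) hs
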